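/- (Diederich–Fornaess Levi form identity) Let r, ψ be C² real functions near a point p of ℂ^n with r(p) < 0, and let ρ = -(-r e^{-Aψ})^η for constants A > 0 and 0 < η < 1. Then for every vector v, L^{J_st}_ρ(p; v) = η(-r)^{η-2} e^{-ηAψ} D(v), where D(v) = A r² [L_ψ(p;v) - ηA|∂ψ(p)(v)|²] + (-r)[L_r(p;v) - 2ηA Re(∂r(p)(v) · conj(∂ψ(p)(v)))] + (1-η)|∂r(p)(v)|². -/

import Mathlib

/-!
Where `r < 0` the function factors as `ρ = φ ∘ r · χ ∘ ψ` with `φ x = -(-x)^η` and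
`χ t = e^{-ηAt}`. The Levi form is a quarter of the sum of the real second directional derivatives
along `v` and `i v`, and each of these follows from the Leibniz rule and the one-variable chain
rule `(φ ∘ u)'' = φ''(u) (u')² + φ'(u) u''`. Summing over `v` and `i v`, the squares and products
of first derivatives recombine into `|∂r|²`, `|∂ψ|²` and `Re (∂r · conj ∂ψ)`.
-/

/-- The standard Levi form (complex Hessian) of a real function `u` on `ℂ^n` at `p` in direction
`v`: `L_u(p;v) = Σ u_{z_j z̄_k}(p) v_j v̄_k = (1/4)(D²u(p)(v,v) + D²u(p)(iv,iv))`. -/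
noncomputable def LeviStd {n : ℕ} (u : (Fin n → ℂ) → ℝ) (p v : Fin n → ℂ) : ℝ :=
  (4 : ℝ)⁻¹ * (fderiv ℝ (fun q => fderiv ℝ u q v) p v
    + fderiv ℝ (fun q => fderiv ℝ u q (Complex.I • v)) p (Complex.I • v))

/-- The complex differential `∂u(p)(v) = Σ u_{z_j}(p) v_j = (1/2)(du(p)(v) - i du(p)(iv))`. -/
noncomputable def delStd {n : ℕ} (u : (Fin n → ℂ) → ℝ) (p v : Fin n → ℂ) : ℂ :=
  (2 : ℂ)⁻¹ * ((fderiv ℝ u p v : ℝ) - Complex.I * (fderiv ℝ u p (Complex.I • v) : ℝ))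

open Filter Topology

section SecondDirDeriv

variable {E : Type*} [NormedAddCommGroup E] [NormedSpace ℝ E]

noncomputable def secondDirDeriv (u : E → ℝ) (p w : E) : ℝ :=
  fderiv ℝ (fun q => fderiv ℝ u q w) p w

variable {u f g : E → ℝ} {p : E}

lemma secondDirDeriv_congr {u' : E → ℝ} (h : u =ᶠ[𝓝 p] u') (w : E) :
    secondDirDeriv u p w = secondDirDeriv u' p w := by
  have hfirst : (fun q => fderiv ℝ u q w) =ᶠ[𝓝 p] fun q => fderiv ℝ u' q w :=
    (h.fderiv (𝕜 := ℝ)).mono fun q hq => congrArg (· w) hq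
  rw [secondDirDeriv, hfirst.fderiv_eq, secondDirDeriv]

lemma ContDiffAt.eventually_hasFDerivAt_fderiv (hu : ContDiffAt ℝ 2 u p) :
    ∀ᶠ q in 𝓝 p, HasFDerivAt u (fderiv ℝ u q) q := by
  filter_upwards [hu.eventually (by norm_num)] with q hq
  exact (hq.differentiableAt (by norm_num)).hasFDerivAt

lemma ContDiffAt.hasFDerivAt_fderiv_apply (hu : ContDiffAt ℝ 2 u p) (w : E) :
    HasFDerivAt (fun q => fderiv ℝ u q w) (fderiv ℝ (fun q => fderiv ℝ u q w) p) p :=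
  (((hu.fderiv_right (m := 1) (by norm_num)).differentiableAt one_ne_zero).clm_apply
    (differentiableAt_const w)).hasFDerivAt

lemma secondDirDeriv_mul (hf : ContDiffAt ℝ 2 f p) (hg : ContDiffAt ℝ 2 g p) (w : E) :
    secondDirDeriv (fun q => f q * g q) p w
      = secondDirDeriv f p w * g p + 2 * (fderiv ℝ f p w * fderiv ℝ g p w)
        + f p * secondDirDeriv g p w := by
  have hfirst : (fun q => fderiv ℝ (fun q => f q * g q) q w)
      =ᶠ[𝓝 p] fun q => f q * fderiv ℝ g q w + g q * fderiv ℝ f q w := by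
    filter_upwards [hf.eventually_hasFDerivAt_fderiv, hg.eventually_hasFDerivAt_fderiv]
      with q hfq hgq
    rw [(hfq.fun_mul hgq).fderiv]
    simp only [add_apply, smul_apply, smul_eq_mul]
  have hsecond : HasFDerivAt (fun q => f q * fderiv ℝ g q w + g q * fderiv ℝ f q w) _ p :=
    ((hf.differentiableAt (by norm_num)).hasFDerivAt.mul (hg.hasFDerivAt_fderiv_apply w)).add
      ((hg.differentiableAt (by norm_num)).hasFDerivAt.mul (hf.hasFDerivAt_fderiv_apply w))
  unfold secondDirDeriv
  rw [hfirst.fderiv_eq, hsecond.fderiv]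
  simp only [add_apply, smul_apply, smul_eq_mul]
  ring

lemma fderiv_comp_apply_of_hasDerivAt {φ : ℝ → ℝ} {φ' : ℝ} (hφ : HasDerivAt φ φ' (u p))
    (hu : DifferentiableAt ℝ u p) (w : E) :
    fderiv ℝ (fun q => φ (u q)) p w = φ' * fderiv ℝ u p w := by
  have hcomp : HasFDerivAt (fun q => φ (u q)) _ p := hφ.comp_hasFDerivAt p hu.hasFDerivAt
  rw [hcomp.fderiv, smul_apply, smul_eq_mul]

lemma secondDirDeriv_comp {φ φ' : ℝ → ℝ} {φ'' : ℝ} (hu : ContDiffAt ℝ 2 u p)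
    (hφ : ∀ᶠ x in 𝓝 (u p), HasDerivAt φ (φ' x) x) (hφ' : HasDerivAt φ' φ'' (u p)) (w : E) :
    secondDirDeriv (fun q => φ (u q)) p w
      = φ'' * fderiv ℝ u p w ^ 2 + φ' (u p) * secondDirDeriv u p w := by
  have hfirst : (fun q => fderiv ℝ (fun q => φ (u q)) q w)
      =ᶠ[𝓝 p] fun q => φ' (u q) * fderiv ℝ u q w := by
    filter_upwards [hu.continuousAt.eventually hφ, hu.eventually_hasFDerivAt_fderiv]
      with q hφq huq
    exact fderiv_comp_apply_of_hasDerivAt hφq huq.differentiableAt w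
  have hsecond : HasFDerivAt (fun q => φ' (u q) * fderiv ℝ u q w) _ p :=
    (hφ'.comp_hasFDerivAt p (hu.differentiableAt (by norm_num)).hasFDerivAt).mul
      (hu.hasFDerivAt_fderiv_apply w)
  unfold secondDirDeriv
  rw [hfirst.fderiv_eq, hsecond.fderiv]
  simp only [add_apply, smul_apply, smul_eq_mul, Function.comp_apply]
  ring

lemma hasDerivAt_neg_rpow_const {x : ℝ} (hx : x < 0) (a : ℝ) :
    HasDerivAt (fun y => (-y) ^ a) (-(a * (-x) ^ (a - 1))) x :=
  ((Real.hasDerivAt_rpow_const (Or.inl (neg_ne_zero.mpr hx.ne))).comp x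
    (hasDerivAt_neg x)).congr_deriv (by ring)

variable {r ψ : E → ℝ}

theorem secondDirDeriv_neg_rpow_mul_exp (hr : ContDiffAt ℝ 2 r p) (hψ : ContDiffAt ℝ 2 ψ p)
    (hp : r p < 0) (A η : ℝ) (w : E) :
    secondDirDeriv (fun q => -((-(r q)) * Real.exp (-(A * ψ q))) ^ η) p w
      = η * (-(r p)) ^ (η - 2) * Real.exp (-(η * A * ψ p))
        * (A * (r p) ^ 2 * (secondDirDeriv ψ p w - η * A * fderiv ℝ ψ p w ^ 2)
          + (-(r p)) * (secondDirDeriv r p w - 2 * η * A * (fderiv ℝ r p w * fderiv ℝ ψ p w))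
          + (1 - η) * fderiv ℝ r p w ^ 2) := by
  have hsplit : (fun q => -((-(r q)) * Real.exp (-(A * ψ q))) ^ η)
      =ᶠ[𝓝 p] fun q => -(-(r q)) ^ η * Real.exp (-(η * A) * ψ q) := by
    filter_upwards [hr.continuousAt.eventually (gt_mem_nhds hp)] with q hq
    rw [Real.mul_rpow (by linarith) (Real.exp_pos _).le, ← Real.exp_mul]
    ring_nf
  have hpow : ∀ᶠ x in 𝓝 (r p), HasDerivAt (fun y => -(-y) ^ η) (η * (-x) ^ (η - 1)) x := by
    filter_upwards [gt_mem_nhds hp] with x hx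
    simpa using (hasDerivAt_neg_rpow_const hx η).fun_neg
  have hpow' : HasDerivAt (fun y => η * (-y) ^ (η - 1))
      (-(η * ((η - 1) * (-r p) ^ (η - 2)))) (r p) := by
    refine ((hasDerivAt_neg_rpow_const hp (η - 1)).const_mul η).congr_deriv ?_
    rw [show η - 1 - 1 = η - 2 by ring]
    ring
  have hexp : ∀ᶠ t in 𝓝 (ψ p),
      HasDerivAt (fun s => Real.exp (-(η * A) * s)) (-(η * A) * Real.exp (-(η * A) * t)) t :=
    Eventually.of_forall fun t => ((hasDerivAt_id' t).const_mul _).exp.congr_deriv (by ring)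
  have hexp' : HasDerivAt (fun t => -(η * A) * Real.exp (-(η * A) * t))
      ((η * A) ^ 2 * Real.exp (-(η * A) * ψ p)) (ψ p) :=
    (((hasDerivAt_id' (ψ p)).const_mul _).exp.const_mul _).congr_deriv (by ring)
  rw [secondDirDeriv_congr hsplit, secondDirDeriv_mul
    (hr.neg.rpow_const_of_ne (by linarith)).neg (contDiffAt_const.mul hψ).exp,
    secondDirDeriv_comp hr hpow hpow', secondDirDeriv_comp hψ hexp hexp']
  have hdr := hr.differentiableAt (by norm_num)
  rw [fderiv_comp_apply_of_hasDerivAt hpow.self_of_nhds hdr,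
    fderiv_comp_apply_of_hasDerivAt hexp.self_of_nhds (hψ.differentiableAt (by norm_num))]
  have hr0 : 0 < -r p := by linarith
  have hpow1 : (-r p) ^ (η - 1) = (-r p) ^ (η - 2) * (-r p) := by
    rw [← Real.rpow_add_one hr0.ne']; ring_nf
  have hpow0 : (-r p) ^ η = (-r p) ^ (η - 2) * (-r p) ^ 2 := by
    rw [← Real.rpow_add_natCast hr0.ne']; norm_num
  rw [hpow1, hpow0, show -(η * A * ψ p) = -(η * A) * ψ p by ring]
  ring

end SecondDirDeriv

section Levi

variable {n : ℕ}

lemma leviStd_eq_secondDirDeriv (u : (Fin n → ℂ) → ℝ) (p v : Fin n → ℂ) :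
    LeviStd u p v = 4⁻¹ * (secondDirDeriv u p v + secondDirDeriv u p (Complex.I • v)) :=
  rfl

lemma delStd_eq_mk (u : (Fin n → ℂ) → ℝ) (p v : Fin n → ℂ) :
    delStd u p v = ⟨fderiv ℝ u p v / 2, -fderiv ℝ u p (Complex.I • v) / 2⟩ := by
  apply Complex.ext <;> simp [delStd, div_eq_inv_mul]

lemma norm_delStd_sq (u : (Fin n → ℂ) → ℝ) (p v : Fin n → ℂ) :
    ‖delStd u p v‖ ^ 2 = (fderiv ℝ u p v ^ 2 + fderiv ℝ u p (Complex.I • v) ^ 2) / 4 := by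
  rw [delStd_eq_mk, Complex.sq_norm, Complex.normSq_mk]
  ring

lemma re_delStd_mul_conj_delStd (u u' : (Fin n → ℂ) → ℝ) (p v : Fin n → ℂ) :
    (delStd u p v * (starRingEnd ℂ) (delStd u' p v)).re
      = (fderiv ℝ u p v * fderiv ℝ u' p v
          + fderiv ℝ u p (Complex.I • v) * fderiv ℝ u' p (Complex.I • v)) / 4 := by
  rw [delStd_eq_mk, delStd_eq_mk, Complex.mul_re, Complex.conj_re, Complex.conj_im]
  ring

end Levi

theorem stmt13_general {n : ℕ} (r ψ : (Fin n → ℂ) → ℝ) (p : Fin n → ℂ)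
    (hr : ContDiffAt ℝ 2 r p) (hψ : ContDiffAt ℝ 2 ψ p)
    (hneg : ∀ᶠ q in nhds p, r q < 0)
    (A η : ℝ) (v : Fin n → ℂ) :
    LeviStd (fun q => -((-(r q)) * Real.exp (-(A * ψ q))) ^ η) p v
      = η * (-(r p)) ^ (η - 2) * Real.exp (-(η * A * ψ p))
        * (A * (r p) ^ 2 * (LeviStd ψ p v - η * A * ‖delStd ψ p v‖ ^ 2)
          + (-(r p)) * (LeviStd r p v
              - 2 * η * A * (delStd r p v * (starRingEnd ℂ) (delStd ψ p v)).re)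
          + (1 - η) * ‖delStd r p v‖ ^ 2) := by
  simp only [leviStd_eq_secondDirDeriv, norm_delStd_sq, re_delStd_mul_conj_delStd,
    secondDirDeriv_neg_rpow_mul_exp hr hψ hneg.self_of_nhds]
  ring

theorem stmt13 {n : ℕ} (r ψ : (Fin n → ℂ) → ℝ) (p : Fin n → ℂ)
    (hr : ContDiffAt ℝ 2 r p) (hψ : ContDiffAt ℝ 2 ψ p)
    (hneg : ∀ᶠ q in nhds p, r q < 0)
    (A η : ℝ) (hA : 0 < A) (hη : 0 < η) (hη1 : η < 1) (v : Fin n → ℂ) :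
    LeviStd (fun q => -((-(r q)) * Real.exp (-(A * ψ q))) ^ η) p v
      = η * (-(r p)) ^ (η - 2) * Real.exp (-(η * A * ψ p))
        * (A * (r p) ^ 2 * (LeviStd ψ p v - η * A * ‖delStd ψ p v‖ ^ 2)
          + (-(r p)) * (LeviStd r p v
              - 2 * η * A * (delStd r p v * (starRingEnd ℂ) (delStd ψ p v)).re)
          + (1 - η) * ‖delStd r p v‖ ^ 2) :=
  stmt13_general r ψ p hr hψ hneg A η v
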